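/- The components of Sk that are < x^x are exactly the following Skolem functions: the constant function 1, the identity function x, and the functions p^x where p ∈ ℕ is a prime number. -/

import Mathlib

/-!
A Skolem function is either a positive integer constant or at least `x` for `x ≥ 1`. Hence in
a power `f ^ g < x^x` either `f` is a constant `n` and `g` is linear (otherwise `n ^ g ≥ 2 ^ x²`
eventually exceeds `x^x`), or `g` is a constant. By induction, every Skolem function below
`x^x` is an exponential polynomial `∑ xᵏ mˣ`. Such a sum is additively reducible unless it is a
single monomial `xᵏ mˣ`, and a monomial splits as a product of two smaller ones unless it is
`1`, `x` or `pˣ` with `p` prime.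

Conversely, no Skolem function lies below `1`, and those below `x` are constant. An exponential
polynomial below `pˣ` lies between `bˣ` and `C xᴷ bˣ` for some base `b < p`; bases of sums and
products are the maximum and the product of the bases, and they are unique, so `pˣ` is neither
a sum nor a product of two such functions.
-/

open Filter

/-- The positive real numbers, the domain/codomain of Skolem functions. -/
abbrev Rpos : Type := {x : ℝ // 0 < x}

/-- `Sk f` asserts that `f` is a Skolem function: `Sk` is the smallest set of functions
from `ℝ^{>0}` to `ℝ^{>0}` containing the constant function `1` and the identity, and closed
under pointwise addition, multiplication and exponentiation. -/
inductive Sk : (Rpos → Rpos) → Prop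
  | one : Sk fun _ => ⟨1, one_pos⟩
  | id : Sk fun x => x
  | add : ∀ {f g : Rpos → Rpos}, Sk f → Sk g →
      Sk fun x => ⟨(f x : ℝ) + (g x : ℝ), add_pos (f x).2 (g x).2⟩
  | mul : ∀ {f g : Rpos → Rpos}, Sk f → Sk g →
      Sk fun x => ⟨(f x : ℝ) * (g x : ℝ), mul_pos (f x).2 (g x).2⟩
  | pow : ∀ {f g : Rpos → Rpos}, Sk f → Sk g →
      Sk fun x => ⟨(f x : ℝ) ^ (g x : ℝ), Real.rpow_pos_of_pos (f x).2 _⟩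

/-- `f < g` for Skolem functions: `f x < g x` for all sufficiently large `x`. -/
def SkLt (f g : Rpos → Rpos) : Prop := ∀ᶠ x in atTop, (f x : ℝ) < (g x : ℝ)

/-- `f ≼ g` : `f` is dominated by `g`, i.e. `f ≤ n·g` eventually, for some `n : ℕ`. -/
def SkPreceq (f g : Rpos → Rpos) : Prop := ∃ n : ℕ, ∀ᶠ x in atTop, (f x : ℝ) ≤ n * (g x : ℝ)

lemma skPreceq_refl (f : Rpos → Rpos) : SkPreceq f f :=
  ⟨1, Filter.Eventually.of_forall fun x => by simp⟩

lemma skPreceq_trans {f g h : Rpos → Rpos} (h1 : SkPreceq f g) (h2 : SkPreceq g h) :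
    SkPreceq f h := by
  obtain ⟨n, hn⟩ := h1
  obtain ⟨m, hm⟩ := h2
  refine ⟨n * m, ?_⟩
  filter_upwards [hn, hm] with x hx1 hx2
  calc (f x : ℝ) ≤ n * (g x : ℝ) := hx1
    _ ≤ n * (m * (h x : ℝ)) := mul_le_mul_of_nonneg_left hx2 (Nat.cast_nonneg n)
    _ = (↑(n * m)) * (h x : ℝ) := by push_cast; ring

/-- The setoid on a set `A` of Skolem functions identifying functions in the same
archimedean class (`f ≍ g` iff `f ≼ g` and `g ≼ f`). -/
def skArchSetoid (A : Set (Rpos → Rpos)) : Setoid A :=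
  ⟨fun a b => SkPreceq a.1 b.1 ∧ SkPreceq b.1 a.1,
   ⟨fun _ => ⟨skPreceq_refl _, skPreceq_refl _⟩,
    fun h => ⟨h.2, h.1⟩,
    fun h1 h2 => ⟨skPreceq_trans h1.1 h2.1, skPreceq_trans h2.2 h1.2⟩⟩⟩

/-- The ordering induced by strict domination `≺` on the set of archimedean classes. -/
def skClassLt (A : Set (Rpos → Rpos)) :
    Quotient (skArchSetoid A) → Quotient (skArchSetoid A) → Prop :=
  fun x y => ∃ a b : A, x = Quotient.mk (skArchSetoid A) a ∧ y = Quotient.mk (skArchSetoid A) b ∧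
    SkPreceq a.1 b.1 ∧ ¬ SkPreceq b.1 a.1


/-- Pointwise sum of positive functions. -/
def skAdd (f g : Rpos → Rpos) : Rpos → Rpos :=
  fun x => ⟨(f x : ℝ) + (g x : ℝ), add_pos (f x).2 (g x).2⟩

/-- Pointwise product of positive functions. -/
def skMul (f g : Rpos → Rpos) : Rpos → Rpos :=
  fun x => ⟨(f x : ℝ) * (g x : ℝ), mul_pos (f x).2 (g x).2⟩

/-- A Skolem function is additively irreducible if it is not the sum of two smaller
Skolem functions. -/
def SkAddIrreducible (f : Rpos → Rpos) : Prop :=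
  ¬ ∃ g h : Rpos → Rpos, Sk g ∧ Sk h ∧ SkLt g f ∧ SkLt h f ∧ f = skAdd g h

/-- A Skolem function is multiplicatively irreducible if it is not the product of two
smaller Skolem functions. -/
def MulIrreducible (f : Rpos → Rpos) : Prop :=
  ¬ ∃ g h : Rpos → Rpos, Sk g ∧ Sk h ∧ SkLt g f ∧ SkLt h f ∧ f = skMul g h

/-- A component is a Skolem function which is both additively and multiplicatively
irreducible. -/
def IsComponent (f : Rpos → Rpos) : Prop := Sk f ∧ SkAddIrreducible f ∧ MulIrreducible f

/-- The constant function `1`. -/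
def oneFun : Rpos → Rpos := fun _ => ⟨1, one_pos⟩

/-- The identity function `x`. -/
def xFun : Rpos → Rpos := fun x => x

/-- The function `x^x`. -/
noncomputable def xPowX : Rpos → Rpos :=
  fun x => ⟨(x : ℝ) ^ (x : ℝ), Real.rpow_pos_of_pos x.2 _⟩

lemma lt_two_rpow {t : ℝ} (ht : 1 ≤ t) : t < 2 ^ t := by
  have := one_add_mul_self_le_rpow_one_add (s := 1) (by norm_num) ht
  norm_num at this
  linarith

open Real in
lemma eventually_mul_pow_mul_rpow_lt_rpow {a b : ℝ} (ha : 0 ≤ a) (hab : a < b) (C : ℝ) (K : ℕ) :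
    ∀ᶠ x in atTop, C * x ^ K * a ^ x < b ^ x := by
  have hb : 0 < b := ha.trans_lt hab
  rcases ha.eq_or_lt with rfl | ha
  · filter_upwards [eventually_gt_atTop 0] with x hx
    rw [zero_rpow hx.ne', mul_zero]
    exact rpow_pos_of_pos hb x
  have hl : 0 < log b - log a := sub_pos.2 (log_lt_log ha hab)
  have hlim := ((tendsto_rpow_mul_exp_neg_mul_atTop_nhds_zero K _ hl).const_mul C).eventually
    (eventually_lt_nhds (by simp : C * 0 < 1))
  filter_upwards [hlim, eventually_gt_atTop 0] with x hx hx0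
  have hsplit : a ^ x = exp (-(log b - log a) * x) * b ^ x := by
    rw [rpow_def_of_pos ha, rpow_def_of_pos hb, ← exp_add]
    ring_nf
  rw [rpow_natCast] at hx
  rw [hsplit, ← mul_assoc]
  have := rpow_pos_of_pos hb x
  nlinarith

open Real in
lemma eventually_rpow_self_lt_two_rpow_sq : ∀ᶠ x : ℝ in atTop, x ^ x < 2 ^ (x ^ 2) := by
  have hlog := isLittleO_log_id_atTop.def (half_pos (log_pos one_lt_two))
  filter_upwards [hlog, eventually_gt_atTop 0] with x hx hx0
  rw [norm_eq_abs, norm_eq_abs, id, abs_of_pos hx0] at hx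
  have : log x < log 2 * x := by
    linarith [le_abs_self (log x), mul_pos (log_pos one_lt_two) hx0]
  rw [rpow_def_of_pos hx0, rpow_def_of_pos two_pos, exp_lt_exp]
  nlinarith

lemma tendsto_coe_rpos_atTop : Tendsto (fun x : Rpos => (x : ℝ)) atTop atTop :=
  tendsto_Ioi_atTop.mp tendsto_id

lemma eventually_one_le_coe : ∀ᶠ x : Rpos in atTop, 1 ≤ (x : ℝ) :=
  tendsto_coe_rpos_atTop.eventually_ge_atTop 1

lemma SkLt.not_eventually_le {f g : Rpos → Rpos} (h : SkLt f g) :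
    ¬ ∀ᶠ x in atTop, (g x : ℝ) ≤ f x := fun hle =>
  let ⟨_, hlt, hle⟩ := (h.and hle).exists
  hlt.not_ge hle

lemma SkLt.of_le_of_lt {f g h : Rpos → Rpos} (hfg : ∀ᶠ x in atTop, (f x : ℝ) ≤ g x)
    (hgh : SkLt g h) : SkLt f h := by
  filter_upwards [hfg, hgh] with x h1 h2
  exact h1.trans_lt h2

lemma SkLt.trans {f g h : Rpos → Rpos} (hfg : SkLt f g) (hgh : SkLt g h) : SkLt f h :=
  SkLt.of_le_of_lt (hfg.mono fun _ => le_of_lt) hgh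

namespace Sk

lemma congr {f g : Rpos → Rpos} (hf : Sk f) (h : ∀ x, (f x : ℝ) = g x) : Sk g :=
  funext (fun x => Subtype.ext (h x)) ▸ hf

lemma natCast {n : ℕ} (hn : 0 < n) : Sk fun _ => ⟨n, Nat.cast_pos.2 hn⟩ := by
  induction n, hn using Nat.le_induction with
  | base => exact Sk.one.congr fun _ => by simp
  | succ n _ ih => exact (Sk.add ih Sk.one).congr fun _ => by push_cast; rfl

lemma npow {f : Rpos → Rpos} (hf : Sk f) (n : ℕ) :
    Sk fun x => ⟨(f x : ℝ) ^ n, pow_pos (f x).2 n⟩ := by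
  induction n with
  | zero => exact Sk.one.congr fun _ => by simp
  | succ n ih => exact (Sk.mul ih hf).congr fun _ => by simp [pow_succ]

lemma one_le {f : Rpos → Rpos} (hf : Sk f) {x : Rpos} (hx : 1 ≤ (x : ℝ)) : 1 ≤ (f x : ℝ) := by
  induction hf with
  | one => exact le_rfl
  | id => exact hx
  | @add f g _ _ ihf _ => exact ihf.trans (le_add_of_nonneg_right (g x).2.le)
  | mul _ _ ihf ihg => exact one_le_mul_of_one_le_of_one_le ihf ihg
  | @pow f g _ _ ihf _ => exact Real.one_le_rpow ihf (g x).2.le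

lemma eq_natCast_or_le {f : Rpos → Rpos} (hf : Sk f) :
    (∃ n : ℕ, 0 < n ∧ ∀ x, (f x : ℝ) = n) ∨ ∀ x : Rpos, 1 ≤ (x : ℝ) → (x : ℝ) ≤ f x := by
  induction hf with
  | one => exact .inl ⟨1, one_pos, fun _ => by simp⟩
  | id => exact .inr fun _ _ => le_rfl
  | @add f g _ _ ihf ihg =>
    rcases ihf with ⟨n, hn, hfn⟩ | hfx
    · rcases ihg with ⟨m, hm, hgm⟩ | hgx
      · exact .inl ⟨n + m, by omega, fun x => by simp [hfn, hgm]⟩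
      · exact .inr fun x hx => (hgx x hx).trans (le_add_of_nonneg_left (f x).2.le)
    · exact .inr fun x hx => (hfx x hx).trans (le_add_of_nonneg_right (g x).2.le)
  | @mul f g hf hg ihf ihg =>
    rcases ihf with ⟨n, hn, hfn⟩ | hfx
    · rcases ihg with ⟨m, hm, hgm⟩ | hgx
      · exact .inl ⟨n * m, Nat.mul_pos hn hm, fun x => by simp [hfn, hgm]⟩
      · exact .inr fun x hx =>
          (hgx x hx).trans (le_mul_of_one_le_left (g x).2.le (hf.one_le hx))
    · exact .inr fun x hx =>
        (hfx x hx).trans (le_mul_of_one_le_right (f x).2.le (hg.one_le hx))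
  | @pow f g _ hg ihf ihg =>
    rcases ihf with ⟨n, hn, hfn⟩ | hfx
    · obtain rfl | hn2 : n = 1 ∨ 2 ≤ n := by omega
      · exact .inl ⟨1, one_pos, fun x => by simp [hfn]⟩
      rcases ihg with ⟨m, hm, hgm⟩ | hgx
      · exact .inl ⟨n ^ m, pow_pos hn m, fun x => by simp [hfn, hgm]⟩
      · refine .inr fun x hx => ?_
        calc (x : ℝ) ≤ 2 ^ (x : ℝ) := (lt_two_rpow hx).le
          _ ≤ 2 ^ (g x : ℝ) := Real.rpow_le_rpow_of_exponent_le one_le_two (hgx x hx)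
          _ ≤ (f x : ℝ) ^ (g x : ℝ) := by
            rw [hfn]
            exact Real.rpow_le_rpow zero_le_two (by exact_mod_cast hn2) (g x).2.le
    · exact .inr fun x hx =>
        (hfx x hx).trans (Real.self_le_rpow_of_one_le (hx.trans (hfx x hx)) (hg.one_le hx))

end Sk

noncomputable def expMonomial (k m : ℕ) (hm : 0 < m) : Rpos → Rpos :=
  fun x => ⟨(x : ℝ) ^ k * (m : ℝ) ^ (x : ℝ),
    mul_pos (pow_pos x.2 k) (Real.rpow_pos_of_pos (Nat.cast_pos.2 hm) _)⟩

/-- Exponential polynomials `∑ xᵏ mˣ`; a coefficient `a` is `a` equal summands. -/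
inductive ExpPoly : (Rpos → Rpos) → Prop
  | monomial (k m : ℕ) (hm : 0 < m) : ExpPoly (expMonomial k m hm)
  | add {f g : Rpos → Rpos} : ExpPoly f → ExpPoly g → ExpPoly (skAdd f g)

lemma skMul_comm (f g : Rpos → Rpos) : skMul f g = skMul g f :=
  funext fun x => Subtype.ext (mul_comm (f x : ℝ) (g x))

lemma skMul_skAdd (f g h : Rpos → Rpos) : skMul f (skAdd g h) = skAdd (skMul f g) (skMul f h) :=
  funext fun x => Subtype.ext (mul_add (f x : ℝ) (g x) (h x))

lemma skMul_expMonomial {k m k' m' : ℕ} (hm : 0 < m) (hm' : 0 < m') :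
    skMul (expMonomial k m hm) (expMonomial k' m' hm') =
      expMonomial (k + k') (m * m') (Nat.mul_pos hm hm') := by
  funext x
  refine Subtype.ext ?_
  simp only [skMul, expMonomial, Nat.cast_mul, pow_add,
    Real.mul_rpow (Nat.cast_nonneg m) (Nat.cast_nonneg m')]
  ring

namespace ExpPoly

lemma congr {f g : Rpos → Rpos} (hf : ExpPoly f) (h : ∀ x, (f x : ℝ) = g x) : ExpPoly g :=
  funext (fun x => Subtype.ext (h x)) ▸ hf

lemma sk {f : Rpos → Rpos} (hf : ExpPoly f) : Sk f := by
  induction hf with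
  | monomial k m hm =>
    exact (Sk.mul (Sk.id.npow k) (Sk.pow (Sk.natCast hm) Sk.id)).congr fun _ => rfl
  | add _ _ ihf ihg => exact Sk.add ihf ihg

lemma natCast {n : ℕ} (hn : 0 < n) : ExpPoly fun _ => ⟨n, Nat.cast_pos.2 hn⟩ := by
  induction n, hn using Nat.le_induction with
  | base => exact (monomial 0 1 one_pos).congr fun _ => by simp [expMonomial]
  | succ n _ ih =>
    exact (add ih (monomial 0 1 one_pos)).congr fun _ => by simp [skAdd, expMonomial]

lemma mul {f g : Rpos → Rpos} (hf : ExpPoly f) (hg : ExpPoly g) : ExpPoly (skMul f g) := by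
  induction hf with
  | monomial k m hm =>
    induction hg with
    | monomial k' m' hm' => rw [skMul_expMonomial]; exact monomial _ _ _
    | add _ _ ihg ihh => rw [skMul_skAdd]; exact add ihg ihh
  | add _ _ ihf ihg => rw [skMul_comm, skMul_skAdd, skMul_comm, skMul_comm g]; exact add ihf ihg

lemma npow {f : Rpos → Rpos} (hf : ExpPoly f) (n : ℕ) :
    ExpPoly fun x => ⟨(f x : ℝ) ^ n, pow_pos (f x).2 n⟩ := by
  induction n with
  | zero => exact (natCast one_pos).congr fun _ => by simp
  | succ n ih => exact (ih.mul hf).congr fun _ => by simp [skMul, pow_succ]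

end ExpPoly

lemma ExpPoly.eq_linear_or_eventually_sq_le {f : Rpos → Rpos} (hf : ExpPoly f) :
    (∃ A B : ℕ, ∀ x, (f x : ℝ) = A * x + B) ∨ ∀ᶠ x : Rpos in atTop, (x : ℝ) ^ 2 ≤ f x := by
  induction hf with
  | monomial k m hm =>
    obtain rfl | hm2 : m = 1 ∨ 2 ≤ m := by omega
    · obtain rfl | rfl | hk : k = 0 ∨ k = 1 ∨ 2 ≤ k := by omega
      · exact .inl ⟨0, 1, fun x => by simp [expMonomial]⟩
      · exact .inl ⟨1, 0, fun x => by simp [expMonomial]⟩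
      · refine .inr ?_
        filter_upwards [eventually_one_le_coe] with x hx
        simpa [expMonomial] using pow_le_pow_right₀ hx hk
    · refine .inr ?_
      filter_upwards [eventually_one_le_coe, tendsto_coe_rpos_atTop.eventually
        (eventually_mul_pow_mul_rpow_lt_rpow zero_le_one one_lt_two 1 2)] with x hx hlt
      simp only [one_mul, Real.one_rpow, mul_one] at hlt
      calc (x : ℝ) ^ 2 ≤ 2 ^ (x : ℝ) := hlt.le
        _ ≤ (m : ℝ) ^ (x : ℝ) := Real.rpow_le_rpow zero_le_two (by exact_mod_cast hm2) x.2.le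
        _ ≤ (x : ℝ) ^ k * (m : ℝ) ^ (x : ℝ) :=
          le_mul_of_one_le_left (by positivity) (one_le_pow₀ hx)
  | @add f g _ _ ihf ihg =>
    rcases ihf with ⟨A, B, hf⟩ | hf
    · rcases ihg with ⟨A', B', hg⟩ | hg
      · exact .inl ⟨A + A', B + B', fun x => by simp only [skAdd, hf, hg]; push_cast; ring⟩
      · exact .inr (hg.mono fun x hx => hx.trans (le_add_of_nonneg_left (f x).2.le))
    · exact .inr (hf.mono fun x hx => hx.trans (le_add_of_nonneg_right (g x).2.le))

noncomputable def skPow (f g : Rpos → Rpos) : Rpos → Rpos :=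
  fun x => ⟨(f x : ℝ) ^ (g x : ℝ), Real.rpow_pos_of_pos (f x).2 _⟩

lemma ExpPoly.skPow_of_eq_natCast {f g : Rpos → Rpos} {n : ℕ} (hn : 2 ≤ n)
    (hfn : ∀ x, (f x : ℝ) = n) (hg : ExpPoly g) (hlt : SkLt (skPow f g) xPowX) :
    ExpPoly (skPow f g) := by
  have hn0 : 0 < n := by omega
  rcases hg.eq_linear_or_eventually_sq_le with ⟨A, B, hAB⟩ | hsq
  · -- `n ^ (A x + B) = n ^ B * (n ^ A) ^ x`
    refine ((natCast (pow_pos hn0 B)).mul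
      (monomial 0 (n ^ A) (pow_pos hn0 A))).congr fun x => ?_
    simp only [skMul, skPow, expMonomial, hfn, hAB, pow_zero, one_mul, Nat.cast_pow]
    have hn0' : (0 : ℝ) < n := by exact_mod_cast hn0
    rw [Real.rpow_add hn0', Real.rpow_natCast, ← Real.rpow_natCast _ A, ← Real.rpow_mul hn0'.le,
      mul_comm]
  · refine (hlt.not_eventually_le ?_).elim
    filter_upwards [hsq, tendsto_coe_rpos_atTop.eventually
      eventually_rpow_self_lt_two_rpow_sq] with x hsq hx
    calc (xPowX x : ℝ) ≤ 2 ^ ((x : ℝ) ^ 2) := hx.le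
      _ ≤ 2 ^ (g x : ℝ) := Real.rpow_le_rpow_of_exponent_le one_le_two hsq
      _ ≤ (f x : ℝ) ^ (g x : ℝ) :=
        hfn x ▸ Real.rpow_le_rpow zero_le_two (by exact_mod_cast hn) (g x).2.le

lemma Sk.expPoly_of_skLt_xPowX {f : Rpos → Rpos} (hf : Sk f) (hlt : SkLt f xPowX) :
    ExpPoly f := by
  induction hf with
  | one => exact (ExpPoly.natCast one_pos).congr fun _ => by simp
  | id => exact (ExpPoly.monomial 1 1 one_pos).congr fun _ => by simp [expMonomial]
  | @add f g _ _ ihf ihg =>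
    refine (ihf (SkLt.of_le_of_lt ?_ hlt)).add (ihg (SkLt.of_le_of_lt ?_ hlt)) <;>
      refine .of_forall fun x => ?_
    exacts [le_add_of_nonneg_right (g x).2.le, le_add_of_nonneg_left (f x).2.le]
  | @mul f g hf hg ihf ihg =>
    refine (ihf (SkLt.of_le_of_lt ?_ hlt)).mul (ihg (SkLt.of_le_of_lt ?_ hlt)) <;>
      filter_upwards [eventually_one_le_coe] with x hx
    exacts [le_mul_of_one_le_right (f x).2.le (hg.one_le hx),
      le_mul_of_one_le_left (g x).2.le (hf.one_le hx)]
  | @pow f g hf hg ihf ihg =>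
    change SkLt (skPow f g) xPowX at hlt
    change ExpPoly (skPow f g)
    rcases hf.eq_natCast_or_le with ⟨n, hn, hfn⟩ | hfx
    · obtain rfl | hn2 : n = 1 ∨ 2 ≤ n := by omega
      · exact (ExpPoly.natCast one_pos).congr fun x => by simp [skPow, hfn]
      refine (ihg (SkLt.of_le_of_lt ?_ hlt)).skPow_of_eq_natCast hn2 hfn hlt
      filter_upwards [eventually_one_le_coe] with x hx
      calc (g x : ℝ) ≤ 2 ^ (g x : ℝ) := (lt_two_rpow (hg.one_le hx)).le
        _ ≤ (f x : ℝ) ^ (g x : ℝ) :=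
          hfn x ▸ Real.rpow_le_rpow zero_le_two (by exact_mod_cast hn2) (g x).2.le
    rcases hg.eq_natCast_or_le with ⟨m, hm, hgm⟩ | hgx
    · refine ((ihf (SkLt.of_le_of_lt ?_ hlt)).npow m).congr fun x => by
        simp [skPow, hgm, Real.rpow_natCast]
      filter_upwards [eventually_one_le_coe] with x hx
      exact Real.self_le_rpow_of_one_le (hf.one_le hx) (hg.one_le hx)
    · refine (hlt.not_eventually_le ?_).elim
      filter_upwards [eventually_one_le_coe] with x hx
      calc (xPowX x : ℝ) ≤ (f x : ℝ) ^ (x : ℝ) :=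
            Real.rpow_le_rpow x.2.le (hfx x hx) x.2.le
        _ ≤ (f x : ℝ) ^ (g x : ℝ) :=
          Real.rpow_le_rpow_of_exponent_le (hx.trans (hfx x hx)) (hgx x hx)

def HasExpBase (f : Rpos → Rpos) (b : ℕ) : Prop :=
  ∃ C K : ℕ, ∀ᶠ x : Rpos in atTop,
    (b : ℝ) ^ (x : ℝ) ≤ f x ∧ (f x : ℝ) ≤ C * (x : ℝ) ^ K * (b : ℝ) ^ (x : ℝ)

lemma hasExpBase_expMonomial (k m : ℕ) (hm : 0 < m) : HasExpBase (expMonomial k m hm) m := by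
  refine ⟨1, k, ?_⟩
  filter_upwards [eventually_one_le_coe] with x hx
  exact ⟨le_mul_of_one_le_left (by positivity) (one_le_pow₀ hx), by simp [expMonomial]⟩

namespace HasExpBase

variable {f g : Rpos → Rpos} {b c : ℕ}

lemma add (hf : HasExpBase f b) (hg : HasExpBase g c) : HasExpBase (skAdd f g) (max b c) := by
  obtain ⟨C, K, hf⟩ := hf
  obtain ⟨C', K', hg⟩ := hg
  refine ⟨C + C', K + K', ?_⟩
  filter_upwards [hf, hg, eventually_one_le_coe] with x ⟨hfl, hfu⟩ ⟨hgl, hgu⟩ hx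
  refine ⟨?_, ?_⟩
  · rcases le_total b c with h | h
    · rw [max_eq_right h]
      exact hgl.trans (le_add_of_nonneg_left (f x).2.le)
    · rw [max_eq_left h]
      exact hfl.trans (le_add_of_nonneg_right (g x).2.le)
  · calc (f x : ℝ) + g x
        ≤ C * (x : ℝ) ^ K * (b : ℝ) ^ (x : ℝ) + C' * (x : ℝ) ^ K' * (c : ℝ) ^ (x : ℝ) :=
          add_le_add hfu hgu
      _ ≤ C * (x : ℝ) ^ (K + K') * ((max b c : ℕ) : ℝ) ^ (x : ℝ) +
          C' * (x : ℝ) ^ (K + K') * ((max b c : ℕ) : ℝ) ^ (x : ℝ) := by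
        gcongr <;> omega
      _ = ((C + C' : ℕ) : ℝ) * (x : ℝ) ^ (K + K') * ((max b c : ℕ) : ℝ) ^ (x : ℝ) := by
        push_cast; ring

lemma mul (hf : HasExpBase f b) (hg : HasExpBase g c) : HasExpBase (skMul f g) (b * c) := by
  obtain ⟨C, K, hf⟩ := hf
  obtain ⟨C', K', hg⟩ := hg
  refine ⟨C * C', K + K', ?_⟩
  filter_upwards [hf, hg] with x ⟨hfl, hfu⟩ ⟨hgl, hgu⟩
  have hbc : ((b * c : ℕ) : ℝ) ^ (x : ℝ) = (b : ℝ) ^ (x : ℝ) * (c : ℝ) ^ (x : ℝ) := by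
    rw [Nat.cast_mul, Real.mul_rpow (Nat.cast_nonneg b) (Nat.cast_nonneg c)]
  refine ⟨?_, ?_⟩
  · rw [hbc]
    exact mul_le_mul hfl hgl (by positivity) (f x).2.le
  · calc (f x : ℝ) * g x
        ≤ (C * (x : ℝ) ^ K * (b : ℝ) ^ (x : ℝ)) * (C' * (x : ℝ) ^ K' * (c : ℝ) ^ (x : ℝ)) :=
          mul_le_mul hfu hgu (g x).2.le ((f x).2.le.trans hfu)
      _ = ((C * C' : ℕ) : ℝ) * (x : ℝ) ^ (K + K') * ((b * c : ℕ) : ℝ) ^ (x : ℝ) := by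
        rw [hbc]; push_cast; ring

lemma le (hb : HasExpBase f b) (hc : HasExpBase f c) : b ≤ c := by
  by_contra! hcb
  obtain ⟨_, _, hb⟩ := hb
  obtain ⟨C, K, hc⟩ := hc
  obtain ⟨x, ⟨hbl, -⟩, ⟨-, hcu⟩, hlt⟩ := (hb.and (hc.and (tendsto_coe_rpos_atTop.eventually
    (eventually_mul_pow_mul_rpow_lt_rpow (Nat.cast_nonneg c) (Nat.cast_lt.2 hcb) C K)))).exists
  linarith

lemma unique (hb : HasExpBase f b) (hc : HasExpBase f c) : b = c :=
  le_antisymm (hb.le hc) (hc.le hb)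

lemma lt_of_skLt {p : ℕ} (hp : 0 < p) (hb : HasExpBase f b)
    (hlt : SkLt f (expMonomial 0 p hp)) : b < p := by
  obtain ⟨_, _, hb⟩ := hb
  obtain ⟨x, ⟨hbl, -⟩, hx⟩ := (hb.and hlt).exists
  have : (b : ℝ) ^ (x : ℝ) < (p : ℝ) ^ (x : ℝ) := by
    simpa [expMonomial] using hbl.trans_lt hx
  exact_mod_cast (Real.rpow_lt_rpow_iff (Nat.cast_nonneg b) (Nat.cast_nonneg p) x.2).1 this

end HasExpBase

lemma ExpPoly.exists_hasExpBase {f : Rpos → Rpos} (hf : ExpPoly f) : ∃ b, HasExpBase f b := by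
  induction hf with
  | monomial k m hm => exact ⟨m, hasExpBase_expMonomial k m hm⟩
  | add _ _ ihf ihg =>
    obtain ⟨b, hb⟩ := ihf
    obtain ⟨c, hc⟩ := ihg
    exact ⟨max b c, hb.add hc⟩

lemma expMonomial_zero {m : ℕ} (hm : 0 < m) :
    expMonomial 0 m hm =
      fun x => ⟨(m : ℝ) ^ (x : ℝ), Real.rpow_pos_of_pos (Nat.cast_pos.2 hm) _⟩ :=
  funext fun _ => Subtype.ext (one_mul _)

lemma expMonomial_zero_one : expMonomial 0 1 one_pos = oneFun :=
  funext fun _ => Subtype.ext (by simp [expMonomial, oneFun])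

lemma expMonomial_one_one : expMonomial 1 1 one_pos = xFun :=
  funext fun _ => Subtype.ext (by simp [expMonomial, xFun])

lemma expMonomial_skLt_xPowX (k m : ℕ) (hm : 0 < m) : SkLt (expMonomial k m hm) xPowX := by
  filter_upwards [tendsto_coe_rpos_atTop.eventually
    ((eventually_mul_pow_mul_rpow_lt_rpow (Nat.cast_nonneg m) (lt_add_one (m : ℝ)) 1 k).and
      (eventually_ge_atTop ((m : ℝ) + 1)))] with x ⟨hlt, hx⟩
  calc (expMonomial k m hm x : ℝ)
        = 1 * (x : ℝ) ^ k * (m : ℝ) ^ (x : ℝ) := by rw [one_mul]; rfl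
    _ < ((m : ℝ) + 1) ^ (x : ℝ) := hlt
    _ ≤ (x : ℝ) ^ (x : ℝ) := Real.rpow_le_rpow (by positivity) hx x.2.le

lemma not_skAddIrreducible_skAdd {g h : Rpos → Rpos} (hg : Sk g) (hh : Sk h) :
    ¬ SkAddIrreducible (skAdd g h) := fun hirr =>
  hirr ⟨g, h, hg, hh, .of_forall fun x => lt_add_of_pos_right _ (h x).2,
    .of_forall fun x => lt_add_of_pos_left _ (g x).2, rfl⟩

lemma not_mulIrreducible_skMul {g h : Rpos → Rpos} (hg : Sk g) (hh : Sk h)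
    (hg1 : ∀ᶠ x in atTop, 1 < (g x : ℝ)) (hh1 : ∀ᶠ x in atTop, 1 < (h x : ℝ)) :
    ¬ MulIrreducible (skMul g h) := fun hirr =>
  hirr ⟨g, h, hg, hh, hh1.mono fun x hx => lt_mul_of_one_lt_right (g x).2 hx,
    hg1.mono fun x hx => lt_mul_of_one_lt_left (h x).2 hx, rfl⟩

lemma one_lt_expMonomial {k m : ℕ} (hm : 0 < m) (h : k ≠ 0 ∨ 1 < m) :
    ∀ᶠ x in atTop, 1 < (expMonomial k m hm x : ℝ) := by
  filter_upwards [tendsto_coe_rpos_atTop.eventually_gt_atTop 1] with x hx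
  have hmx : 1 ≤ (m : ℝ) ^ (x : ℝ) := Real.one_le_rpow (by exact_mod_cast hm) x.2.le
  rcases h with hk | hm1
  · exact one_lt_mul_of_lt_of_le (one_lt_pow₀ hx hk) hmx
  · exact one_lt_mul_of_le_of_lt (one_le_pow₀ hx.le)
      (Real.one_lt_rpow (by exact_mod_cast hm1) x.2)

lemma not_mulIrreducible_expMonomial {k m k₁ m₁ k₂ m₂ : ℕ} (hm : 0 < m) (hm₁ : 0 < m₁)
    (hm₂ : 0 < m₂) (hk_eq : k = k₁ + k₂) (hm_eq : m = m₁ * m₂) (h₁ : k₁ ≠ 0 ∨ 1 < m₁)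
    (h₂ : k₂ ≠ 0 ∨ 1 < m₂) : ¬ MulIrreducible (expMonomial k m hm) := by
  subst hk_eq hm_eq
  rw [← skMul_expMonomial hm₁ hm₂]
  exact not_mulIrreducible_skMul (ExpPoly.monomial k₁ m₁ hm₁).sk
    (ExpPoly.monomial k₂ m₂ hm₂).sk (one_lt_expMonomial hm₁ h₁) (one_lt_expMonomial hm₂ h₂)

lemma eq_of_mulIrreducible_expMonomial {k m : ℕ} (hm : 0 < m)
    (h : MulIrreducible (expMonomial k m hm)) :
    (k = 0 ∧ m = 1) ∨ (k = 1 ∧ m = 1) ∨ (k = 0 ∧ m.Prime) := by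
  obtain rfl | hk := Nat.eq_zero_or_pos k
  · obtain rfl | hm2 : m = 1 ∨ 2 ≤ m := by omega
    · exact .inl ⟨rfl, rfl⟩
    refine .inr (.inr ⟨rfl, by_contra fun hp => ?_⟩)
    obtain ⟨a, ⟨b, rfl⟩, ha, hab⟩ := Nat.exists_dvd_of_not_prime2 hm2 hp
    have hb : 1 < b := (Nat.lt_mul_iff_one_lt_right (by omega)).1 hab
    exact not_mulIrreducible_expMonomial hm (by omega) (by omega) (zero_add 0).symm rfl
      (.inr ha) (.inr hb) h
  · by_cases h11 : k = 1 ∧ m = 1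
    · exact .inr (.inl h11)
    exact (not_mulIrreducible_expMonomial hm one_pos hm (k₁ := 1) (k₂ := k - 1) (by omega)
      (one_mul m).symm (.inl one_ne_zero) (by omega) h).elim

lemma Sk.not_skLt_oneFun {g : Rpos → Rpos} (hg : Sk g) : ¬ SkLt g oneFun := fun hlt =>
  hlt.not_eventually_le (eventually_one_le_coe.mono fun _ hx => hg.one_le hx)

lemma isComponent_oneFun : IsComponent oneFun :=
  ⟨Sk.one, fun ⟨_, _, hg, _, hlt, _⟩ => hg.not_skLt_oneFun hlt,
    fun ⟨_, _, hg, _, hlt, _⟩ => hg.not_skLt_oneFun hlt⟩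

lemma Sk.exists_eq_natCast_of_skLt_xFun {g : Rpos → Rpos} (hg : Sk g) (hlt : SkLt g xFun) :
    ∃ n : ℕ, ∀ x, (g x : ℝ) = n := by
  rcases hg.eq_natCast_or_le with ⟨n, -, hn⟩ | hle
  · exact ⟨n, hn⟩
  · exact (hlt.not_eventually_le (eventually_one_le_coe.mono hle)).elim

lemma isComponent_xFun : IsComponent xFun := by
  have not_const : ∀ c : ℝ, ¬ ∀ x : Rpos, (xFun x : ℝ) = c := fun c h => by
    have := h ⟨|c| + 1, by positivity⟩
    simp only [xFun] at this
    linarith [le_abs_self c]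
  refine ⟨Sk.id, ?_, ?_⟩ <;> rintro ⟨g, h, hg, hh, hgx, hhx, hgh⟩ <;>
    obtain ⟨n, hn⟩ := hg.exists_eq_natCast_of_skLt_xFun hgx <;>
    obtain ⟨m, hm⟩ := hh.exists_eq_natCast_of_skLt_xFun hhx
  · exact not_const (n + m) fun x => by rw [hgh]; simp [skAdd, hn, hm]
  · exact not_const (n * m) fun x => by rw [hgh]; simp [skMul, hn, hm]

lemma Sk.exists_hasExpBase_lt {p : ℕ} (hp : 0 < p) {g : Rpos → Rpos} (hg : Sk g)
    (hlt : SkLt g (expMonomial 0 p hp)) : ∃ b < p, HasExpBase g b := by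
  obtain ⟨b, hb⟩ :=
    (hg.expPoly_of_skLt_xPowX (hlt.trans (expMonomial_skLt_xPowX 0 p hp))).exists_hasExpBase
  exact ⟨b, hb.lt_of_skLt hp hlt, hb⟩

lemma isComponent_expMonomial_of_prime {p : ℕ} (hp : p.Prime) :
    IsComponent (expMonomial 0 p hp.pos) := by
  have hpx := hasExpBase_expMonomial 0 p hp.pos
  refine ⟨(ExpPoly.monomial 0 p hp.pos).sk, ?_, ?_⟩ <;>
    rintro ⟨g, h, hg, hh, hgp, hhp, hgh⟩ <;>
    obtain ⟨b, hbp, hb⟩ := hg.exists_hasExpBase_lt hp.pos hgp <;>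
    obtain ⟨c, hcp, hc⟩ := hh.exists_hasExpBase_lt hp.pos hhp
  · have := hpx.unique (hgh ▸ hb.add hc)
    omega
  · have hbc : p = b * c := hpx.unique (hgh ▸ hb.mul hc)
    rcases hp.eq_one_or_self_of_dvd b ⟨c, hbc⟩ with rfl | rfl
    · omega
    · exact hbp.false

/-- The components of `Sk` below `x^x` are exactly `1`, `x` and the functions
`p^x` with `p ∈ ℕ` prime. -/
theorem skolem_components_below_x_pow_x (f : Rpos → Rpos) :
    (IsComponent f ∧ SkLt f xPowX) ↔
      (f = oneFun ∨ f = xFun ∨ ∃ (p : ℕ) (hp : p.Prime),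
        f = fun x => ⟨(p : ℝ) ^ (x : ℝ),
          Real.rpow_pos_of_pos (by exact_mod_cast hp.pos) _⟩) := by
  constructor
  · rintro ⟨hf, hlt⟩
    cases hf.1.expPoly_of_skLt_xPowX hlt with
    | monomial k m hm =>
      rcases eq_of_mulIrreducible_expMonomial hm hf.2.2 with
        ⟨rfl, rfl⟩ | ⟨rfl, rfl⟩ | ⟨rfl, hp⟩
      · exact .inl expMonomial_zero_one
      · exact .inr (.inl expMonomial_one_one)
      · exact .inr (.inr ⟨m, hp, expMonomial_zero hm⟩)
    | add hg hh => exact (not_skAddIrreducible_skAdd hg.sk hh.sk hf.2.1).elim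
  · rintro (rfl | rfl | ⟨p, hp, rfl⟩)
    · exact ⟨isComponent_oneFun, expMonomial_zero_one ▸ expMonomial_skLt_xPowX 0 1 one_pos⟩
    · exact ⟨isComponent_xFun, expMonomial_one_one ▸ expMonomial_skLt_xPowX 1 1 one_pos⟩
    · rw [← expMonomial_zero hp.pos]
      exact ⟨isComponent_expMonomial_of_prime hp, expMonomial_skLt_xPowX 0 p hp.pos⟩
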